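/- arXiv:2512.07365 — 5 statements merged into one kernel-verified Lean document; each statement's English description precedes it below -/
import Mathlib

section
/- For all m ∈ ℕ and real α, β > 0, the integral ∫_{-1}^{1} (1-x)^{α}(1+x)^{β-1} P_m^{(α,β)}(x) dx equals (-1)^m 2^{α+β} Γ(m+α+1) Γ(β) / Γ(m+α+β+1). -/
lemma GammaAddNat (x : ℝ) (hx : 0 < x) (m : ℕ) :
    Real.Gamma (x + m) = Real.Gamma x * ∏ j ∈ Finset.range m, (x + j) := by
  induction m with
  | zero => simp
  | succ n ih =>
    have h : x + ((n:ℕ)+1 : ℕ) = (x + n) + 1 := by push_cast; ring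
    rw [h, Real.Gamma_add_one (by positivity), ih, Finset.prod_range_succ]; ring

lemma realBeta {u v : ℝ} (hu : 0 < u) (hv : 0 < v) :
    ∫ x in (0:ℝ)..1, x ^ (u-1) * (1-x) ^ (v-1)
      = Real.Gamma u * Real.Gamma v / Real.Gamma (u+v) := by
  have h := Complex.Gamma_mul_Gamma_eq_betaIntegral (s := (u:ℂ)) (t := (v:ℂ))
    (by simpa using hu) (by simpa using hv)
  have hbeta : Complex.betaIntegral (u:ℂ) (v:ℂ)
      = ((∫ x in (0:ℝ)..1, x ^ (u-1) * (1-x) ^ (v-1) : ℝ) : ℂ) := by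
    rw [← intervalIntegral.integral_ofReal]
    apply intervalIntegral.integral_congr
    intro x hx
    rw [Set.uIcc_of_le (by norm_num : (0:ℝ) ≤ 1)] at hx
    obtain ⟨hx0, hx1⟩ := hx
    simp only []
    rw [Complex.ofReal_mul, Complex.ofReal_cpow hx0,
      Complex.ofReal_cpow (by linarith : (0:ℝ) ≤ 1 - x)]
    push_cast
    ring
  rw [hbeta, ← Complex.ofReal_add, Complex.Gamma_ofReal, Complex.Gamma_ofReal,
    Complex.Gamma_ofReal, ← Complex.ofReal_mul, ← Complex.ofReal_mul] at h
  have := Complex.ofReal_injective h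
  have hne : Real.Gamma (u+v) ≠ 0 := (Real.Gamma_pos_of_pos (by linarith)).ne'
  field_simp
  linarith [this]

lemma altSum (m : ℕ) : ∀ c : ℝ, ∑ k ∈ Finset.range (m+1),
    (-1:ℝ)^k * (m.choose k) * ∏ j ∈ Finset.range m, (c + k + j)
    = (-1)^m * m.factorial := by
  induction m with
  | zero => intro c; simp
  | succ n ih =>
    intro c
    set f : ℕ → ℝ := fun k => ∏ j ∈ Finset.range (n+1), (c + k + j) with hf
    have hdiff : ∀ k : ℕ, f (k+1) - f k
        = (n+1) * ∏ j ∈ Finset.range n, ((c+1) + k + j) := by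
      intro k
      have h1 : f (k+1) = (∏ j ∈ Finset.range n, ((c+1) + k + j)) * ((c+1) + k + n) := by
        simp only [hf, Finset.prod_range_succ]
        push_cast; ring_nf
      have h2 : f k = (∏ j ∈ Finset.range n, ((c+1) + k + j)) * (c + k) := by
        simp only [hf]
        rw [Finset.prod_range_succ']
        push_cast; ring_nf
      rw [h1, h2]; ring
    have key : ∑ k ∈ Finset.range (n+2), (-1:ℝ)^k * ((n+1).choose k) * f k
        = -∑ k ∈ Finset.range (n+1), (-1:ℝ)^k * (n.choose k) * (f (k+1) - f k) := by
      rw [Finset.sum_range_succ' (fun k => (-1:ℝ)^k * ((n+1).choose k) * f k)]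
      have hT : ∑ i ∈ Finset.range (n+1), (-1:ℝ)^(i+1) * (n.choose (i+1)) * f (i+1)
          = ∑ k ∈ Finset.range (n+1), (-1:ℝ)^k * (n.choose k) * f k - f 0 := by
        have := Finset.sum_range_succ' (fun k => (-1:ℝ)^k * (n.choose k) * f k) (n+1)
        have hlast : ∑ k ∈ Finset.range (n+2), (-1:ℝ)^k * (n.choose k) * f k
            = ∑ k ∈ Finset.range (n+1), (-1:ℝ)^k * (n.choose k) * f k := by
          rw [Finset.sum_range_succ, Nat.choose_succ_self]; simp
        rw [hlast] at this
        simp only [pow_zero, Nat.choose_zero_right, Nat.cast_one, one_mul] at this ⊢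
        linarith [this]
      have hsplit : ∀ i ∈ Finset.range (n+1),
          (-1:ℝ)^(i+1) * (((n+1).choose (i+1) : ℕ) : ℝ) * f (i+1)
          = (-((-1:ℝ)^i * (n.choose i) * f (i+1))) + (-1:ℝ)^(i+1) * (n.choose (i+1)) * f (i+1) := by
        intro i _
        rw [Nat.choose_succ_succ]
        push_cast
        ring
      rw [Finset.sum_congr rfl hsplit, Finset.sum_add_distrib, hT]
      simp only [pow_zero, Nat.choose_zero_right, Nat.cast_one, one_mul,
        Finset.sum_neg_distrib]
      have hsub : ∑ k ∈ Finset.range (n+1), (-1:ℝ)^k * (n.choose k) * (f (k+1) - f k)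
          = (∑ k ∈ Finset.range (n+1), (-1:ℝ)^k * (n.choose k) * f (k+1))
            - ∑ k ∈ Finset.range (n+1), (-1:ℝ)^k * (n.choose k) * f k := by
        rw [← Finset.sum_sub_distrib]
        exact Finset.sum_congr rfl (fun k _ => by ring)
      rw [hsub]; ring
    calc ∑ k ∈ Finset.range (n+1+1), (-1:ℝ)^k * ((n+1).choose k) * ∏ j ∈ Finset.range (n+1), (c + k + j)
        = -∑ k ∈ Finset.range (n+1), (-1:ℝ)^k * (n.choose k) * (f (k+1) - f k) := key
      _ = -((n+1) * ∑ k ∈ Finset.range (n+1), (-1:ℝ)^k * (n.choose k) * ∏ j ∈ Finset.range n, ((c+1) + k + j)) := by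
          rw [Finset.mul_sum]
          congr 1
          apply Finset.sum_congr rfl
          intro k _
          rw [hdiff k]; ring
      _ = -((n+1) * ((-1)^n * n.factorial)) := by rw [ih (c+1)]
      _ = (-1)^(n+1) * (n+1).factorial := by
          rw [Nat.factorial_succ]; push_cast; ring

/-- The Jacobi polynomial `P_n^{(α,β)}`, defined by its hypergeometric-type sum. -/
noncomputable def jacobiP (n : ℕ) (α β : ℝ) (x : ℝ) : ℝ :=
  (Real.Gamma (α + n + 1) / (n.factorial * Real.Gamma (α + β + n + 1))) *
    ∑ m ∈ Finset.range (n + 1),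
      (n.choose m : ℝ) * Real.Gamma (α + β + n + m + 1) / Real.Gamma (α + m + 1) *
        ((x - 1) / 2) ^ m

theorem stmt1 (m : ℕ) (α β : ℝ) (hα : 0 < α) (hβ : 0 < β) :
    ∫ x in (-1 : ℝ)..1, (1 - x) ^ α * (1 + x) ^ (β - 1) * jacobiP m α β x
      = (-1) ^ m * 2 ^ (α + β) * Real.Gamma (m + α + 1) * Real.Gamma β /
          Real.Gamma (m + α + β + 1) := by
  set F : ℝ → ℝ := fun x => (1 - x) ^ α * (1 + x) ^ (β - 1) * jacobiP m α β x with hF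
  set C : ℝ := Real.Gamma (α + m + 1) / (m.factorial * Real.Gamma (α + β + m + 1)) with hC
  set d : ℕ → ℝ := fun k => (m.choose k : ℝ) * Real.Gamma (α + β + m + k + 1) / Real.Gamma (α + k + 1) with hd
  set g : ℕ → ℝ → ℝ := fun k t => t ^ (β - 1) * ((t-1)^k * (1-t) ^ α) with hg
  -- step 1 : substitution
  have h0 := intervalIntegral.integral_comp_mul_add F two_ne_zero (-1) (a := 0) (b := 1)
  rw [show (2:ℝ)*0 + -1 = -1 by norm_num, show (2:ℝ)*1 + -1 = 1 by norm_num,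
    smul_eq_mul] at h0
  -- step 2 : integrand on [0,1]
  have h2 : ∀ t ∈ Set.uIcc (0:ℝ) 1, F (2*t + -1)
      = (2 ^ (α+β-1) * C) * ∑ k ∈ Finset.range (m+1), d k * g k t := by
    intro t ht
    rw [Set.uIcc_of_le (by norm_num : (0:ℝ) ≤ 1)] at ht
    obtain ⟨ht0, ht1⟩ := ht
    have e1 : (1 - (2*t + -1)) = 2 * (1-t) := by ring
    have e2 : (1 + (2*t + -1)) = 2 * t := by ring
    have e3 : ((2*t + -1 - 1)/2) = t - 1 := by ring
    simp only [hF, jacobiP, e1, e2, e3]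
    rw [Real.mul_rpow (by norm_num) (by linarith), Real.mul_rpow (by norm_num) ht0]
    have hsum : ∑ k ∈ Finset.range (m+1), d k * g k t
        = (t ^ (β-1) * (1-t) ^ α) * ∑ k ∈ Finset.range (m+1),
            (m.choose k : ℝ) * Real.Gamma (α + β + m + k + 1) / Real.Gamma (α + k + 1)
              * (t-1)^k := by
      rw [Finset.mul_sum]
      exact Finset.sum_congr rfl (fun k _ => by simp only [hd, hg]; ring)
    have h2pow : (2:ℝ) ^ α * 2 ^ (β-1) = 2 ^ (α+β-1) := by
      rw [← Real.rpow_add (by norm_num : (0:ℝ) < 2)]; ring_nf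
    rw [hsum, ← h2pow]
    ring
  -- step 3 : integrability
  have hInt : ∀ k : ℕ, IntervalIntegrable (g k) MeasureTheory.volume 0 1 := by
    intro k
    apply IntervalIntegrable.mul_continuousOn
    · exact intervalIntegral.intervalIntegrable_rpow' (by linarith)
    · apply ContinuousOn.mul
      · exact (Continuous.pow (by continuity) k).continuousOn
      · exact (continuous_const.sub continuous_id).continuousOn.rpow_const
          (fun x _ => Or.inr hα.le)
  -- step 4 : evaluate each integral
  have hval : ∀ k : ℕ, ∫ t in (0:ℝ)..1, g k t
      = (-1:ℝ)^k * (Real.Gamma β * Real.Gamma (α+k+1) / Real.Gamma (β+(α+k+1))) := by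
    intro k
    have h1 : ∀ t ∈ Set.uIcc (0:ℝ) 1, g k t
        = (-1:ℝ)^k * (t ^ (β-1) * (1-t) ^ ((α+k+1)-1)) := by
      intro t ht
      rw [Set.uIcc_of_le (by norm_num : (0:ℝ) ≤ 1)] at ht
      obtain ⟨ht0, ht1⟩ := ht
      have h1t : (0:ℝ) ≤ 1 - t := by linarith
      have e4 : ((t:ℝ)-1)^k = (-1:ℝ)^k * (1-t)^k := by
        rw [show t - 1 = -(1-t) by ring, neg_pow]
      have e5 : (1-t) ^ ((α+(k:ℝ)+1)-1) = (1-t)^(k:ℕ) * (1-t) ^ α := by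
        rw [← Real.rpow_natCast (1-t) k,
          ← Real.rpow_add' h1t (by positivity : (k:ℝ) + α ≠ 0)]
        congr 1; ring
      simp only [hg]
      rw [e4, e5]; ring
    rw [intervalIntegral.integral_congr h1, intervalIntegral.integral_const_mul,
      realBeta hβ (by positivity : (0:ℝ) < α + k + 1)]
  -- step 5 : per-term algebra
  have hterm : ∀ k ∈ Finset.range (m+1),
      d k * ((-1:ℝ)^k * (Real.Gamma β * Real.Gamma (α+k+1) / Real.Gamma (β+(α+k+1))))
      = Real.Gamma β * ((-1:ℝ)^k * (m.choose k) * ∏ j ∈ Finset.range m, ((α+β+1) + k + j)) := by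
    intro k _
    have hg1 : Real.Gamma (α + β + m + k + 1)
        = Real.Gamma (α+β+k+1) * ∏ j ∈ Finset.range m, ((α+β+1) + k + j) := by
      have h := GammaAddNat (α+β+k+1) (by positivity) m
      rw [show α+β+(m:ℝ)+k+1 = (α+β+(k:ℝ)+1) + (m:ℕ) by push_cast; ring, h]
      congr 1
      exact Finset.prod_congr rfl (fun j _ => by push_cast; ring)
    have hgne1 : Real.Gamma (α+(k:ℝ)+1) ≠ 0 := (Real.Gamma_pos_of_pos (by positivity)).ne'
    have hgne3 : Real.Gamma (α+β+(k:ℝ)+1) ≠ 0 := (Real.Gamma_pos_of_pos (by positivity)).ne'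
    have e : Real.Gamma (β+(α+(k:ℝ)+1)) = Real.Gamma (α+β+(k:ℝ)+1) := by
      congr 1; ring
    simp only [hd]
    rw [hg1, e]
    field_simp
  -- step 6 : assemble
  have h3 : ∫ t in (0:ℝ)..1, F (2*t + -1)
      = (2 ^ (α+β-1) * C) * ∑ k ∈ Finset.range (m+1), d k * ∫ t in (0:ℝ)..1, g k t := by
    rw [intervalIntegral.integral_congr h2, intervalIntegral.integral_const_mul]
    congr 1
    rw [intervalIntegral.integral_finset_sum
      (fun k _ => (hInt k).const_mul (d k))]
    exact Finset.sum_congr rfl (fun k _ => intervalIntegral.integral_const_mul _ _)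
  have h4 : ∑ k ∈ Finset.range (m+1), d k * ∫ t in (0:ℝ)..1, g k t
      = Real.Gamma β * ((-1:ℝ)^m * m.factorial) := by
    calc ∑ k ∈ Finset.range (m+1), d k * ∫ t in (0:ℝ)..1, g k t
        = ∑ k ∈ Finset.range (m+1), Real.Gamma β *
            ((-1:ℝ)^k * (m.choose k) * ∏ j ∈ Finset.range m, ((α+β+1) + k + j)) := by
          refine Finset.sum_congr rfl (fun k hk => ?_)
          rw [hval k]; exact hterm k hk
      _ = Real.Gamma β * ∑ k ∈ Finset.range (m+1),
            (-1:ℝ)^k * (m.choose k) * ∏ j ∈ Finset.range m, ((α+β+1) + k + j) := by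
          rw [Finset.mul_sum]
      _ = Real.Gamma β * ((-1:ℝ)^m * m.factorial) := by rw [altSum m (α+β+1)]
  -- final algebra
  have hLHS : ∫ x in (-1:ℝ)..1, F x
      = 2 * ((2 ^ (α+β-1) * C) * (Real.Gamma β * ((-1:ℝ)^m * m.factorial))) := by
    rw [← h4, ← h3]
    linarith [h0]
  rw [hLHS]
  have h2pow2 : (2:ℝ) ^ (α+β-1) = 2 ^ (α+β) / 2 := by
    rw [Real.rpow_sub (by norm_num : (0:ℝ) < 2), Real.rpow_one]
  have eg1 : Real.Gamma (α+(m:ℝ)+1) = Real.Gamma ((m:ℝ)+α+1) := by congr 1; ring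
  have eg2 : Real.Gamma (α+β+(m:ℝ)+1) = Real.Gamma ((m:ℝ)+α+β+1) := by congr 1; ring
  have hne1 : Real.Gamma ((m:ℝ)+α+β+1) ≠ 0 := (Real.Gamma_pos_of_pos (by positivity)).ne'
  have hne2 : (m.factorial : ℝ) ≠ 0 := Nat.cast_ne_zero.mpr m.factorial_ne_zero
  rw [hC, eg1, eg2, h2pow2]
  field_simp
end

section
/- Let w: (a,b) → ℝ be a C¹ weight function with w(a⁺) = w(b⁻) = 0, and let {p_n} be the orthonormal polynomials for w. Define φ_n(x) = √(w(x)) p_n(x). Then the differentiation matrix D with entries D_{m,n} = ∫_a^b φ_m'(x) φ_n(x) dx is skew-symmetric: D_{m,n} + D_{n,m} = 0 for all m, n ∈ ℕ. -/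
open MeasureTheory Set Filter Topology

/-!
Where `w > 0`, the product rule gives
`(√w f)' · √w g = (w'/2 · f + w f') g`; where `w = 0` both sides vanish, because a zero of the
nonnegative `C¹` function `w` is a minimum, so `w' = 0` there. Adding the same identity with
`f` and `g` exchanged yields `(w f g)'`, whose integral over `[a, b]` is `0` since `w` vanishes at
both endpoints.
-/

section SqrtWeight

variable {w f g : ℝ → ℝ}

lemma sqrt_mul_deriv_sqrt_mul {x : ℝ} (hw : DifferentiableAt ℝ w x)
    (hf : DifferentiableAt ℝ f x) (hw_nonneg : ∀ᶠ y in 𝓝 x, 0 ≤ w y) :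
    √(w x) * deriv (fun y => √(w y) * f y) x = deriv w x / 2 * f x + w x * deriv f x := by
  rcases hw_nonneg.self_of_nhds.eq_or_lt with hzero | hpos
  · have hmin : IsLocalMin w x := hw_nonneg.mono fun y hy => hzero ▸ hy
    simp [← hzero, hmin.deriv_eq_zero]
  · have hsqrt : √(w x) ≠ 0 := by positivity
    have hderiv : HasDerivAt (fun y => √(w y) * f y)
        (deriv w x / (2 * √(w x)) * f x + √(w x) * deriv f x) x :=
      (hw.hasDerivAt.sqrt hpos.ne').mul hf.hasDerivAt
    rw [hderiv.deriv]
    field_simp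
    rw [Real.sq_sqrt hpos.le]
    ring

lemma integral_deriv_sqrt_mul_mul_sqrt_mul {a b : ℝ} (hab : a ≤ b) (hw : Differentiable ℝ w)
    (hf : Differentiable ℝ f) (hw_nonneg : ∀ x ∈ Ioo a b, 0 ≤ w x) (g : ℝ → ℝ) :
    (∫ x in a..b, deriv (fun y => √(w y) * f y) x * (√(w x) * g x)) =
      ∫ x in a..b, (deriv w x / 2 * f x + w x * deriv f x) * g x := by
  refine intervalIntegral.integral_congr_ae ?_
  filter_upwards [volume.ae_ne b] with x hxb hx
  rw [uIoc_of_le hab] at hx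
  have hx' : x ∈ Ioo a b := ⟨hx.1, hx.2.lt_of_ne hxb⟩
  have hw_nonneg_nhds : ∀ᶠ y in 𝓝 x, 0 ≤ w y :=
    eventually_of_mem (isOpen_Ioo.mem_nhds hx') hw_nonneg
  rw [mul_left_comm, ← mul_assoc, sqrt_mul_deriv_sqrt_mul (hw x) (hf x) hw_nonneg_nhds]

theorem integral_deriv_sqrt_mul_mul_add_eq_zero {a b : ℝ} (hab : a ≤ b) (hw : ContDiff ℝ 1 w)
    (hf : ContDiff ℝ 1 f) (hg : ContDiff ℝ 1 g) (hw_nonneg : ∀ x ∈ Ioo a b, 0 ≤ w x)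
    (hwa : w a = 0) (hwb : w b = 0) :
    (∫ x in a..b, deriv (fun y => √(w y) * f y) x * (√(w x) * g x)) +
      ∫ x in a..b, deriv (fun y => √(w y) * g y) x * (√(w x) * f x) = 0 := by
  let G : (ℝ → ℝ) → (ℝ → ℝ) → ℝ → ℝ := fun f g x =>
    (deriv w x / 2 * f x + w x * deriv f x) * g x
  have hG_cont : ∀ {f g : ℝ → ℝ}, ContDiff ℝ 1 f → ContDiff ℝ 1 g → Continuous (G f g) :=
    fun hf hg => by
      have := hw.continuous_deriv le_rfl
      have := hf.continuous_deriv le_rfl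
      have := hw.continuous; have := hf.continuous; have := hg.continuous
      fun_prop
  have hderiv : ∀ x ∈ uIcc a b, HasDerivAt (fun y => w y * (f y * g y)) (G f g x + G g f x) x :=
    fun x _ => by
      refine ((hw.differentiable one_ne_zero x).hasDerivAt.mul
        ((hf.differentiable one_ne_zero x).hasDerivAt.mul
          (hg.differentiable one_ne_zero x).hasDerivAt)).congr_deriv ?_
      simp only [G, Pi.mul_apply]
      ring
  have hw' := hw.differentiable one_ne_zero
  rw [integral_deriv_sqrt_mul_mul_sqrt_mul hab hw' (hf.differentiable one_ne_zero) hw_nonneg,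
    integral_deriv_sqrt_mul_mul_sqrt_mul hab hw' (hg.differentiable one_ne_zero) hw_nonneg,
    ← intervalIntegral.integral_add ((hG_cont hf hg).intervalIntegrable a b)
      ((hG_cont hg hf).intervalIntegrable a b),
    intervalIntegral.integral_eq_sub_of_hasDerivAt hderiv
      (((hG_cont hf hg).add (hG_cont hg hf)).intervalIntegrable a b), hwa, hwb]
  ring

end SqrtWeight

theorem stmt4_general (a b : ℝ) (hab : a < b) (w : ℝ → ℝ)
    (hw_smooth : ContDiff ℝ 1 w)
    (hw_nonneg : ∀ x ∈ Set.Ioo a b, 0 ≤ w x)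
    (hwa : Filter.Tendsto w (nhdsWithin a (Set.Ioi a)) (nhds 0))
    (hwb : Filter.Tendsto w (nhdsWithin b (Set.Iio b)) (nhds 0))
    (p : ℕ → Polynomial ℝ)
    (φ : ℕ → ℝ → ℝ)
    (hφ : ∀ n x, φ n x = Real.sqrt (w x) * (p n).eval x)
    (D : ℕ → ℕ → ℝ)
    (hD : ∀ m n, D m n = ∫ x in a..b, deriv (φ m) x * φ n x) :
    ∀ m n, D m n + D n m = 0 := by
  obtain rfl : φ = fun n x => √(w x) * (p n).eval x := funext fun n => funext (hφ n)
  have hwa0 : w a = 0 := tendsto_nhds_unique hw_smooth.continuous.continuousWithinAt.tendsto hwa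
  have hwb0 : w b = 0 := tendsto_nhds_unique hw_smooth.continuous.continuousWithinAt.tendsto hwb
  intro m n
  rw [hD, hD]
  exact integral_deriv_sqrt_mul_mul_add_eq_zero hab.le hw_smooth ((p m).contDiff_aeval 1)
    ((p n).contDiff_aeval 1) hw_nonneg hwa0 hwb0

theorem stmt4 (a b : ℝ) (hab : a < b) (w : ℝ → ℝ)
    (hw_smooth : ContDiff ℝ 1 w)
    (hw_nonneg : ∀ x ∈ Set.Ioo a b, 0 ≤ w x)
    (hwa : Filter.Tendsto w (nhdsWithin a (Set.Ioi a)) (nhds 0))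
    (hwb : Filter.Tendsto w (nhdsWithin b (Set.Iio b)) (nhds 0))
    (p : ℕ → Polynomial ℝ)
    (hdeg : ∀ n, (p n).degree = n)
    (horth : ∀ m n, (∫ x in a..b, (p m).eval x * (p n).eval x * w x)
        = if m = n then 1 else 0)
    (φ : ℕ → ℝ → ℝ)
    (hφ : ∀ n x, φ n x = Real.sqrt (w x) * (p n).eval x)
    (D : ℕ → ℕ → ℝ)
    (hD : ∀ m n, D m n = ∫ x in a..b, deriv (φ m) x * φ n x) :
    ∀ m n, D m n + D n m = 0 :=
  stmt4_general a b hab w hw_smooth hw_nonneg hwa hwb p φ hφ D hD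
end

section
/- For the Jacobi weight w(x) = (1-x)^α (1+x)^β with α, β > 0, the pre-differentiation matrix entry with n = 0 satisfies D̃_{m,0} = ∫_{-1}^1 (d/dx)[√w(x) P_m^{(α,β)}(x)] √w(x) dx = 2^{α+β-1} Γ(α+1) Γ(β+1) / Γ(α+β+m+1) · [(β+1)_m − (−1)^m (α+1)_m] for all m ∈ ℕ, where (z)_m is the Pochhammer symbol. -/
/-- The Pochhammer symbol (rising factorial) for a real argument. -/
noncomputable def poch (z : ℝ) (m : ℕ) : ℝ := ∏ k ∈ Finset.range m, (z + k)

/-!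
Write `s = √w`. On `(-1, 1)` one has `(s P)' s = (w P)' / 2 + w P' / 2`, and `(w P)'` integrates
to zero because `w(±1) = 0`, so the entry equals `½ ∫ w P'`. Expanding `P` in powers of
`(x - 1) / 2`, every term of `∫ w P'` is a Beta integral, and the entry becomes a multiple of
`∑ₖ (-1)ᵏ C(m,k) k (α+β+1+k)ₘ / (α+k)`. Dividing the degree `m + 1` polynomial `k (α+β+1+k)ₘ` by
`k + α` splits this into `∑ₖ (-1)ᵏ C(m,k) q(k)` for a monic `q` of degree `m`, which is an `m`-th
forward difference and equals `(-1)ᵐ m!`, and the partial fraction sum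
`∑ₖ (-1)ᵏ C(m,k) / (α+k) = m! / (α (α+1)ₘ)`.
-/

section AlternatingSums

open Finset Polynomial

theorem sum_neg_one_pow_mul_choose_mul_eval {R : Type*} [CommRing R] {n : ℕ} {p : R[X]}
    (hp : p.natDegree ≤ n) :
    ∑ j ∈ range (n + 1), (-1) ^ j * (n.choose j : R) * p.eval (j : R) =
      (-1) ^ n * n.factorial * p.coeff n := by
  have hΔ : (fwdDiff 1)^[n] p.eval 0 = n.factorial * p.coeff n := by
    rcases hp.lt_or_eq with hlt | rfl
    · simp [Polynomial.fwdDiff_iter_eq_zero_of_degree_lt hlt, coeff_eq_zero_of_natDegree_lt hlt]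
    · simp [Polynomial.fwdDiff_iter_degree_eq_factorial, mul_comm]
  have hsign : ∀ j ∈ range (n + 1), (-1 : R) ^ j = (-1) ^ n * (-1) ^ (n - j) := fun j hj => by
    obtain ⟨d, rfl⟩ := Nat.exists_eq_add_of_le (Nat.lt_succ_iff.mp (mem_range.mp hj))
    rw [Nat.add_sub_cancel_left, ← pow_add, add_assoc, pow_add, ← two_mul, pow_mul]
    simp
  rw [fwdDiff_iter_eq_sum_shift] at hΔ
  simp only [zsmul_eq_mul, zero_add, nsmul_eq_mul, mul_one, Int.cast_mul, Int.cast_pow,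
    Int.cast_neg, Int.cast_one, Int.cast_natCast] at hΔ
  rw [mul_assoc, ← hΔ, mul_sum]
  exact sum_congr rfl fun j hj => by rw [hsign j hj]; ring

theorem sum_neg_one_pow_mul_choose_mul_eval_div {K : Type*} [Field K] {n : ℕ} {p : K[X]}
    (hp : p.natDegree ≤ n + 1) {x : K} (hx : ∀ j ≤ n, x + j ≠ 0) :
    ∑ j ∈ range (n + 1), (-1) ^ j * (n.choose j : K) * p.eval (j : K) / (x + j) =
      (-1) ^ n * n.factorial * p.coeff (n + 1) +
        p.eval (-x) * ∑ j ∈ range (n + 1), (-1) ^ j * (n.choose j : K) / (x + j) := by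
  set q := p /ₘ (X - C (-x))
  have hdiv : p = C (p.eval (-x)) + (X - C (-x)) * q := by
    rw [← modByMonic_X_sub_C_eq_C_eval, modByMonic_add_div p (X - C (-x))]
  have hq : q.natDegree ≤ n := by
    rw [natDegree_divByMonic _ (monic_X_sub_C (-x)), natDegree_X_sub_C]; omega
  have hcoeff : p.coeff (n + 1) = q.coeff n := by
    rw [hdiv, coeff_add, coeff_C, if_neg n.succ_ne_zero, sub_mul, coeff_sub, coeff_X_mul,
      coeff_C_mul, coeff_eq_zero_of_natDegree_lt (by omega : q.natDegree < n + 1)]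
    ring
  rw [hcoeff, ← sum_neg_one_pow_mul_choose_mul_eval hq, mul_sum, ← sum_add_distrib]
  refine sum_congr rfl fun j hj => ?_
  have hxj := hx j (Nat.lt_succ_iff.mp (mem_range.mp hj))
  conv_lhs => rw [hdiv]
  simp only [eval_add, eval_C, eval_mul, eval_sub, eval_X]
  field_simp
  ring

theorem sum_neg_one_pow_mul_choose_div {K : Type*} [Field K] {n : ℕ} {x : K}
    (hx : ∀ j ≤ n, x + j ≠ 0) :
    ∑ j ∈ range (n + 1), (-1) ^ j * (n.choose j : K) / (x + j) =
      n.factorial / ∏ j ∈ range (n + 1), (x + j) := by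
  have h := sum_neg_one_pow_mul_choose_mul_eval_div
    (descPochhammer_natDegree K (n + 1)).le hx
  have hlead : (descPochhammer K (n + 1)).coeff (n + 1) = 1 := by
    simpa [descPochhammer_natDegree] using (monic_descPochhammer K (n + 1)).coeff_natDegree
  have hneg : ∏ j ∈ range (n + 1), (-x - j) = (-1) ^ (n + 1) * ∏ j ∈ range (n + 1), (x + j) := by
    simp_rw [show ∀ j : ℕ, -x - (j : K) = -(x + j) from fun j => by ring, prod_neg, card_range]
  rw [sum_eq_zero fun j hj => by rw [descPochhammer_eval_coe_nat_of_lt (mem_range.mp hj)]; simp,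
    hlead, descPochhammer_eval_eq_prod_range, hneg] at h
  have hprod : ∏ j ∈ range (n + 1), (x + j) ≠ 0 :=
    prod_ne_zero_iff.mpr fun j hj => hx j (Nat.lt_succ_iff.mp (mem_range.mp hj))
  rw [eq_div_iff hprod]
  refine mul_left_cancel₀ (pow_ne_zero n (neg_ne_zero.mpr (one_ne_zero (α := K)))) ?_
  linear_combination h

theorem poch_eq_eval_ascPochhammer (z : ℝ) (n : ℕ) : poch z n = (ascPochhammer ℝ n).eval z := by
  induction n with
  | zero => simp [poch]
  | succ n ih => rw [poch, prod_range_succ, ← poch, ih, ascPochhammer_succ_right]; simp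

theorem mul_poch_add_one (z : ℝ) (n : ℕ) : z * poch (z + 1) n = ∏ j ∈ range (n + 1), (z + j) := by
  rw [prod_range_succ', poch, mul_comm]
  push_cast
  exact congrArg₂ _ (prod_congr rfl fun j _ => by ring) (by ring)

theorem sum_neg_one_pow_mul_choose_mul_poch_div {n : ℕ} {c x : ℝ} (hx : ∀ j ≤ n, x + j ≠ 0) :
    ∑ k ∈ range (n + 1), (-1) ^ k * (n.choose k : ℝ) * (k * poch (c + k) n) / (x + k) =
      (-1) ^ n * n.factorial - n.factorial * poch (c - x) n / poch (x + 1) n := by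
  set Q := (ascPochhammer ℝ n).comp (X + C c)
  have hQ : Q.Monic := (monic_ascPochhammer ℝ n).comp_X_add_C c
  have hQdeg : Q.natDegree = n := by
    rw [natDegree_comp, ascPochhammer_natDegree, natDegree_X_add_C, mul_one]
  have heval : ∀ y, (X * Q).eval y = y * poch (c + y) n := fun y => by
    simp [Q, poch_eq_eval_ascPochhammer, add_comm]
  have hcoeff : (X * Q).coeff (n + 1) = 1 := by rw [coeff_X_mul, ← hQdeg, hQ.coeff_natDegree]
  have hdeg : (X * Q).natDegree ≤ n + 1 :=
    (natDegree_mul_le).trans (by rw [natDegree_X, hQdeg, add_comm])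
  have h := sum_neg_one_pow_mul_choose_mul_eval_div hdeg hx
  simp only [heval, hcoeff, sum_neg_one_pow_mul_choose_div hx, ← mul_poch_add_one] at h
  have hx0 : x ≠ 0 := by simpa using hx 0 (Nat.zero_le n)
  rw [h, ← sub_eq_add_neg c x]
  field_simp
  ring

end AlternatingSums

open MeasureTheory Set intervalIntegral

theorem integral_deriv_sqrt_mul_mul_sqrt {w w' P P' : ℝ → ℝ} {a b : ℝ} (hab : a ≤ b)
    (hw : ContinuousOn w (Icc a b)) (hw' : ∀ x ∈ Ioo a b, HasDerivAt w (w' x) x)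
    (hpos : ∀ x ∈ Ioo a b, 0 < w x) (ha : w a = 0) (hb : w b = 0)
    (hw'int : IntervalIntegrable w' volume a b)
    (hP : ∀ x, HasDerivAt P (P' x) x) (hP' : Continuous P') :
    ∫ x in a..b, deriv (fun y => √(w y) * P y) x * √(w x) = (∫ x in a..b, w x * P' x) / 2 := by
  have hPc : Continuous P := continuous_iff_continuousAt.2 fun x => (hP x).continuousAt
  have hint₁ : IntervalIntegrable (fun x => w' x * P x) volume a b :=
    hw'int.mul_continuousOn hPc.continuousOn
  have hint₂ : IntervalIntegrable (fun x => w x * P' x) volume a b :=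
    (hw.mul hP'.continuousOn).intervalIntegrable_of_Icc hab
  have hpt : EqOn (fun x => deriv (fun y => √(w y) * P y) x * √(w x))
      (fun x => (w' x * P x + w x * P' x) / 2 + w x * P' x / 2) (Ioo a b) := fun x hx => by
    have hne : √(w x) ≠ 0 := Real.sqrt_ne_zero'.mpr (hpos x hx)
    dsimp only
    rw [(((hw' x hx).sqrt (hpos x hx).ne').fun_mul (hP x)).deriv]
    field_simp
    rw [Real.sq_sqrt (hpos x hx).le]
    ring
  have hFTC : ∫ x in a..b, (w' x * P x + w x * P' x) = 0 := by
    rw [integral_eq_sub_of_hasDerivAt_of_le hab (hw.mul hPc.continuousOn)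
      (fun x hx => (hw' x hx).fun_mul (hP x)) (hint₁.add hint₂)]
    simp [ha, hb]
  rw [integral_congr_Ioo_of_le hab hpt, integral_add ((hint₁.add hint₂).div_const 2)
    (hint₂.div_const 2), intervalIntegral.integral_div, intervalIntegral.integral_div, hFTC]
  simp

theorem Real.integral_rpow_mul_one_sub_rpow {a b : ℝ} (ha : 0 < a) (hb : 0 < b) :
    ∫ x in (0 : ℝ)..1, x ^ (a - 1) * (1 - x) ^ (b - 1) =
      Real.Gamma a * Real.Gamma b / Real.Gamma (a + b) := by
  have hβ : Complex.betaIntegral a b = ↑(∫ x in (0 : ℝ)..1, x ^ (a - 1) * (1 - x) ^ (b - 1)) := by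
    rw [Complex.betaIntegral, ← intervalIntegral.integral_ofReal]
    refine integral_congr_Ioo_of_le zero_le_one fun x hx => ?_
    rw [Complex.ofReal_mul, Complex.ofReal_cpow hx.1.le, Complex.ofReal_cpow (by linarith [hx.2])]
    push_cast
    rfl
  have h := Complex.Gamma_mul_Gamma_eq_betaIntegral (s := a) (t := b) (by simpa) (by simpa)
  rw [hβ, ← Complex.ofReal_add, Complex.Gamma_ofReal, Complex.Gamma_ofReal,
    Complex.Gamma_ofReal] at h
  rw [eq_div_iff (Real.Gamma_pos_of_pos (add_pos ha hb)).ne', mul_comm]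
  exact_mod_cast h.symm

noncomputable def jacobiWeight (p q x : ℝ) : ℝ := (1 - x) ^ p * (1 + x) ^ q

theorem jacobiWeight_pos {p q x : ℝ} (hx : x ∈ Ioo (-1) 1) : 0 < jacobiWeight p q x :=
  mul_pos (Real.rpow_pos_of_pos (by linarith [hx.2]) p)
    (Real.rpow_pos_of_pos (by linarith [hx.1]) q)

theorem continuous_jacobiWeight {p q : ℝ} (hp : 0 ≤ p) (hq : 0 ≤ q) :
    Continuous (jacobiWeight p q) :=
  ((Real.continuous_rpow_const hp).comp (continuous_const.sub continuous_id)).mul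
    ((Real.continuous_rpow_const hq).comp (continuous_const.add continuous_id))

theorem hasDerivAt_jacobiWeight {p q x : ℝ} (hx : x ∈ Ioo (-1) 1) :
    HasDerivAt (jacobiWeight p q)
      (q * jacobiWeight p (q - 1) x - p * jacobiWeight (p - 1) q x) x := by
  have h₁ : HasDerivAt (fun y : ℝ => (1 - y) ^ p) (-1 * p * (1 - x) ^ (p - 1)) x := by
    simpa using ((hasDerivAt_id x).const_sub 1).rpow_const (p := p) (Or.inl (sub_pos.mpr hx.2).ne')
  have h₂ : HasDerivAt (fun y : ℝ => (1 + y) ^ q) (1 * q * (1 + x) ^ (q - 1)) x := by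
    simpa using ((hasDerivAt_id x).const_add 1).rpow_const (p := q)
      (Or.inl (neg_lt_iff_pos_add'.mp hx.1).ne')
  exact (h₁.fun_mul h₂).congr_deriv (by unfold jacobiWeight; ring)

theorem intervalIntegrable_jacobiWeight {p q : ℝ} (hp : -1 < p) (hq : -1 < q) :
    IntervalIntegrable (jacobiWeight p q) volume (-1) 1 := by
  unfold jacobiWeight
  have hleft : IntervalIntegrable (fun x : ℝ => (1 - x) ^ p * (1 + x) ^ q) volume (-1) 0 := by
    have h := (intervalIntegrable_rpow' (a := 0) (b := 1) hq).comp_add_right 1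
    rw [zero_sub, sub_self] at h
    have hc : ContinuousOn (fun x : ℝ => (1 - x) ^ p) (uIcc (-1) 0) :=
      (by fun_prop : Continuous fun x : ℝ => 1 - x).continuousOn.rpow_const fun x hx => by
        rw [uIcc_of_le (by norm_num)] at hx
        exact Or.inl (by linarith [hx.2])
    simpa only [add_comm] using h.continuousOn_mul hc
  have hright : IntervalIntegrable (fun x : ℝ => (1 - x) ^ p * (1 + x) ^ q) volume 0 1 := by
    have h := ((intervalIntegrable_rpow' (a := 0) (b := 1) hp).comp_sub_left 1).symm
    rw [sub_zero, sub_self] at h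
    have hc : ContinuousOn (fun x : ℝ => (1 + x) ^ q) (uIcc 0 1) :=
      (by fun_prop : Continuous fun x : ℝ => 1 + x).continuousOn.rpow_const fun x hx => by
        rw [uIcc_of_le (by norm_num)] at hx
        exact Or.inl (by linarith [hx.1])
    exact h.mul_continuousOn hc
  exact hleft.trans hright

theorem integral_jacobiWeight {p q : ℝ} (hp : -1 < p) (hq : -1 < q) :
    ∫ x in (-1 : ℝ)..1, jacobiWeight p q x =
      2 ^ (p + q + 1) * (Real.Gamma (p + 1) * Real.Gamma (q + 1) / Real.Gamma (p + q + 2)) := by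
  have hsub : ∫ t in (0 : ℝ)..1, jacobiWeight p q (2 * t - 1) =
      2⁻¹ * ∫ x in (-1 : ℝ)..1, jacobiWeight p q x := by
    rw [integral_comp_mul_sub _ two_ne_zero]; norm_num
  have hpt : EqOn (fun t => jacobiWeight p q (2 * t - 1))
      (fun t => 2 ^ (p + q) * (t ^ (q + 1 - 1) * (1 - t) ^ (p + 1 - 1))) (Ioo 0 1) :=
    fun t ht => by
      simp only [jacobiWeight, add_sub_cancel_right]
      rw [show 1 - (2 * t - 1) = 2 * (1 - t) by ring, show 1 + (2 * t - 1) = 2 * t by ring,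
        Real.mul_rpow zero_le_two (by linarith [ht.2]), Real.mul_rpow zero_le_two ht.1.le,
        Real.rpow_add two_pos]
      ring
  rw [integral_congr_Ioo_of_le zero_le_one hpt, intervalIntegral.integral_const_mul,
    Real.integral_rpow_mul_one_sub_rpow (by linarith) (by linarith)] at hsub
  rw [Real.rpow_add_one two_ne_zero, show p + q + 2 = q + 1 + (p + 1) by ring]
  linear_combination -2 * hsub

theorem Real.Gamma_add_nat_eq_poch_mul {x : ℝ} (hx : 0 < x) (n : ℕ) :
    Real.Gamma (x + n) = poch x n * Real.Gamma x := by
  induction n with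
  | zero => simp [poch]
  | succ n ih =>
    rw [Nat.cast_succ, ← add_assoc, Real.Gamma_add_one (by positivity), ih, poch, poch,
      Finset.prod_range_succ]
    ring

theorem integral_jacobiWeight_mul_pow {p q : ℝ} (hp : -1 < p) (hq : -1 < q) (k : ℕ) :
    ∫ x in (-1 : ℝ)..1, jacobiWeight p q x * ((x - 1) / 2) ^ k =
      (-1) ^ k * 2 ^ (p + q + 1) *
        (Real.Gamma (p + k + 1) * Real.Gamma (q + 1) / Real.Gamma (p + q + k + 2)) := by
  have hpt : EqOn (fun x => jacobiWeight p q x * ((x - 1) / 2) ^ k)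
      (fun x => (-1 / 2) ^ k * jacobiWeight (p + k) q x) (Ioo (-1) 1) := fun x hx => by
    simp only [jacobiWeight]
    rw [Real.rpow_add_natCast (sub_pos.mpr hx.2).ne', show (x - 1) / 2 = -1 / 2 * (1 - x) by ring,
      mul_pow]
    ring
  have hpk : -1 < p + k := by linarith [k.cast_nonneg (α := ℝ)]
  rw [integral_congr_Ioo_of_le (by norm_num) hpt, intervalIntegral.integral_const_mul,
    integral_jacobiWeight hpk hq, show p + k + q + 1 = p + q + 1 + k by ring,
    show p + k + q + 2 = p + q + k + 2 by ring, Real.rpow_add_natCast two_ne_zero, div_pow]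
  field_simp

theorem integral_jacobiWeight_mul_deriv_pow {p q : ℝ} (hp : -1 < p) (hq : -1 < q) (k : ℕ) :
    ∫ x in (-1 : ℝ)..1, jacobiWeight p q x * (k * ((x - 1) / 2) ^ (k - 1) * (1 / 2)) =
      k * (-1) ^ (k + 1) * 2 ^ (p + q) *
        (Real.Gamma (p + k) * Real.Gamma (q + 1) / Real.Gamma (p + q + k + 1)) := by
  rcases k with _ | k
  · simp
  have hpt : ∀ x, jacobiWeight p q x * ((k + 1 : ℕ) * ((x - 1) / 2) ^ (k + 1 - 1) * (1 / 2)) =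
      (k + 1) / 2 * (jacobiWeight p q x * ((x - 1) / 2) ^ k) := fun x => by
    push_cast; ring
  simp_rw [hpt]
  rw [intervalIntegral.integral_const_mul, integral_jacobiWeight_mul_pow hp hq,
    Real.rpow_add_one two_ne_zero]
  push_cast
  rw [show p + (k + 1) = p + k + 1 by ring, show p + q + (k + 1) + 1 = p + q + k + 2 by ring]
  ring

noncomputable def jacobiCoeff (n : ℕ) (α β : ℝ) (k : ℕ) : ℝ :=
  Real.Gamma (α + n + 1) / (n.factorial * Real.Gamma (α + β + n + 1)) *
    ((n.choose k : ℝ) * Real.Gamma (α + β + n + k + 1) / Real.Gamma (α + k + 1))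

theorem jacobiP_eq_sum (n : ℕ) (α β x : ℝ) :
    jacobiP n α β x = ∑ k ∈ Finset.range (n + 1), jacobiCoeff n α β k * ((x - 1) / 2) ^ k := by
  rw [jacobiP, Finset.mul_sum]
  simp only [jacobiCoeff, mul_assoc]

noncomputable def jacobiPDeriv (n : ℕ) (α β x : ℝ) : ℝ :=
  ∑ k ∈ Finset.range (n + 1), jacobiCoeff n α β k * (k * ((x - 1) / 2) ^ (k - 1) * (1 / 2))

theorem hasDerivAt_jacobiP (n : ℕ) (α β x : ℝ) :
    HasDerivAt (jacobiP n α β) (jacobiPDeriv n α β x) x := by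
  rw [funext (jacobiP_eq_sum n α β), jacobiPDeriv]
  exact HasDerivAt.fun_sum fun k _ =>
    ((((hasDerivAt_id x).sub_const 1).div_const 2).pow k).const_mul _

theorem jacobiCoeff_mul_moment {α β : ℝ} (hα : 0 < α) (hβ : 0 < β) (n k : ℕ) :
    jacobiCoeff n α β k * (k * (-1) ^ (k + 1) * 2 ^ (α + β) *
        (Real.Gamma (α + k) * Real.Gamma (β + 1) / Real.Gamma (α + β + k + 1))) =
      -(2 ^ (α + β) * Real.Gamma (α + 1) * Real.Gamma (β + 1) * poch (α + 1) n /
          (n.factorial * Real.Gamma (α + β + n + 1))) *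
        ((-1) ^ k * (n.choose k : ℝ) * (k * poch (α + β + 1 + k) n) / (α + k)) := by
  have hαk : 0 < α + k := by positivity
  rw [jacobiCoeff, show α + n + 1 = α + 1 + n by ring,
    Real.Gamma_add_nat_eq_poch_mul (by positivity),
    show α + β + n + k + 1 = α + β + 1 + k + n by ring,
    Real.Gamma_add_nat_eq_poch_mul (by positivity), Real.Gamma_add_one hαk.ne',
    show α + β + k + 1 = α + β + 1 + k by ring]
  have := (Real.Gamma_pos_of_pos hαk).ne'
  have := (Real.Gamma_pos_of_pos (show 0 < α + β + 1 + k by positivity)).ne'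
  have := (Real.Gamma_pos_of_pos (show 0 < α + β + n + 1 by positivity)).ne'
  field_simp
  ring

theorem integral_jacobiWeight_mul_deriv_jacobiP {α β : ℝ} (hα : 0 < α) (hβ : 0 < β) (n : ℕ) :
    ∫ x in (-1 : ℝ)..1, jacobiWeight α β x * jacobiPDeriv n α β x =
      2 ^ (α + β) * Real.Gamma (α + 1) * Real.Gamma (β + 1) / Real.Gamma (α + β + n + 1) *
        (poch (β + 1) n - (-1) ^ n * poch (α + 1) n) := by
  have hterm : ∀ k ∈ Finset.range (n + 1), IntervalIntegrable
      (fun x => jacobiWeight α β x * (jacobiCoeff n α β k * (k * ((x - 1) / 2) ^ (k - 1) * (1 / 2))))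
      volume (-1) 1 := fun k _ =>
    ((continuous_jacobiWeight hα.le hβ.le).mul (by fun_prop)).intervalIntegrable _ _
  simp_rw [jacobiPDeriv, Finset.mul_sum]
  rw [integral_finsetSum hterm]
  simp_rw [mul_left_comm (jacobiWeight α β _) (jacobiCoeff n α β _),
    intervalIntegral.integral_const_mul,
    integral_jacobiWeight_mul_deriv_pow (by linarith : -1 < α) (by linarith : -1 < β),
    jacobiCoeff_mul_moment hα hβ, ← Finset.mul_sum]
  rw [sum_neg_one_pow_mul_choose_mul_poch_div (x := α) fun j _ => by positivity,
    show α + β + 1 - α = β + 1 by ring]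
  have : 0 < poch (α + 1) n := Finset.prod_pos fun i _ => by positivity
  have := (Real.Gamma_pos_of_pos (show 0 < α + β + n + 1 by positivity)).ne'
  field_simp
  ring

theorem stmt6 (α β : ℝ) (hα : 0 < α) (hβ : 0 < β) (m : ℕ) :
    (∫ x in (-1 : ℝ)..1,
        deriv (fun y => Real.sqrt ((1 - y) ^ α * (1 + y) ^ β) * jacobiP m α β y) x *
          Real.sqrt ((1 - x) ^ α * (1 + x) ^ β))
      = 2 ^ (α + β - 1) * Real.Gamma (α + 1) * Real.Gamma (β + 1) /
          Real.Gamma (α + β + m + 1) *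
          (poch (β + 1) m - (-1) ^ m * poch (α + 1) m) := by
  have hw' : IntervalIntegrable
      (fun x => β * jacobiWeight α (β - 1) x - α * jacobiWeight (α - 1) β x) volume (-1) 1 :=
    ((intervalIntegrable_jacobiWeight (by linarith) (by linarith)).const_mul β).sub
      ((intervalIntegrable_jacobiWeight (by linarith) (by linarith)).const_mul α)
  calc _ = (∫ x in (-1 : ℝ)..1, jacobiWeight α β x * jacobiPDeriv m α β x) / 2 :=
      integral_deriv_sqrt_mul_mul_sqrt (by norm_num)
        (continuous_jacobiWeight hα.le hβ.le).continuousOn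
        (fun x hx => hasDerivAt_jacobiWeight hx) (fun x hx => jacobiWeight_pos hx)
        (by simp [jacobiWeight, hβ.ne']) (by simp [jacobiWeight, hα.ne']) hw'
        (hasDerivAt_jacobiP m α β) (by unfold jacobiPDeriv; fun_prop)
    _ = _ := by
      rw [integral_jacobiWeight_mul_deriv_jacobiP hα hβ, Real.rpow_sub_one two_ne_zero]
      ring
end

section
/- Let A and B be N×N skew-symmetric matrices that are semi-separable of rank 1, i.e. A_{m,n} = a_m b_n for m < n, A_{n,n} = 0, A_{m,n} = −a_n b_m for m > n, and similarly B with vectors p, q. Then C = AB is semi-separable of rank at most 2: every submatrix of C lying strictly above the diagonal (or strictly below it) has rank at most 2. -/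
open Matrix

lemma rank2 {k l : ℕ} (x z : Fin k → ℝ) (y w : Fin l → ℝ) :
    Matrix.rank (Matrix.of fun i j => x i * y j + z i * w j) ≤ 2 := by
  have he : (Matrix.of fun i j => x i * y j + z i * w j) =
      (Matrix.of fun i (t : Fin 2) => if t = 0 then x i else z i) *
      (Matrix.of fun (t : Fin 2) j => if t = 0 then y j else w j) := by
    ext i j
    simp [Matrix.mul_apply, Fin.sum_univ_two]
  rw [he]
  refine le_trans (Matrix.rank_mul_le_left _ _) ?_
  simpa using Matrix.rank_le_card_width (Matrix.of fun i (t : Fin 2) => if t = 0 then x i else z i)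

lemma key {N : ℕ} (A B : Matrix (Fin N) (Fin N) ℝ) (a b p q : Fin N → ℝ)
    (hAu : ∀ m n, m < n → A m n = a m * b n) (hAd : ∀ n, A n n = 0)
    (hAl : ∀ m n, n < m → A m n = -(a n * b m))
    (hBu : ∀ m n, m < n → B m n = p m * q n) (hBd : ∀ n, B n n = 0)
    (hBl : ∀ m n, n < m → B m n = -(p n * q m))
    (m n : Fin N) (hmn : m < n) :
    (A * B) m n =
      (-(b m * ∑ k, if k < m then a k * p k else 0)
        - a m * ∑ k, if k ≤ m then b k * p k else 0) * q n
      + a m * (q n * (∑ k, if k < n then b k * p k else 0)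
        - p n * ∑ k, if n < k then b k * q k else 0) := by
  rw [Matrix.mul_apply]
  have h : ∀ k, A m k * B k n =
      -((if k < m then a k * p k else 0) * (b m * q n))
      - (if k ≤ m then b k * p k else 0) * (a m * q n)
      + (if k < n then b k * p k else 0) * (a m * q n)
      - (if n < k then b k * q k else 0) * (a m * p n) := by
    intro k
    rcases lt_trichotomy k m with h1 | rfl | h1
    · rw [hAl m k h1, hBu k n (h1.trans hmn), if_pos h1, if_pos h1.le,
        if_pos (h1.trans hmn), if_neg (h1.trans hmn).asymm]
      ring
    · rw [hAd, zero_mul, if_neg (lt_irrefl k), if_pos le_rfl, if_pos hmn, if_neg hmn.asymm]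
      ring
    · rcases lt_trichotomy k n with h2 | rfl | h2
      · rw [hAu m k h1, hBu k n h2, if_neg h1.asymm, if_neg (not_le.mpr h1),
          if_pos h2, if_neg h2.asymm]
        ring
      · rw [hBd, mul_zero, if_neg hmn.asymm, if_neg (not_le.mpr hmn),
          if_neg (lt_irrefl k), if_neg (lt_irrefl k)]
        ring
      · rw [hAu m k (hmn.trans h2), hBl k n h2, if_neg (hmn.trans h2).asymm,
          if_neg (not_le.mpr (hmn.trans h2)), if_neg h2.asymm, if_pos h2]
        ring
  rw [Finset.sum_congr rfl fun k _ => h k]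
  simp only [Finset.sum_sub_distrib, Finset.sum_add_distrib, Finset.sum_neg_distrib,
    ← Finset.sum_mul]
  ring

/-- A matrix is semi-separable of rank `≤ r` if every submatrix lying wholly
strictly above the main diagonal, or wholly strictly below it, has rank `≤ r`. -/
def IsSemiSep {N : ℕ} (M : Matrix (Fin N) (Fin N) ℝ) (r : ℕ) : Prop :=
  (∀ (k l : ℕ) (row : Fin k → Fin N) (col : Fin l → Fin N),
      (∀ i j, row i < col j) →
        Matrix.rank (Matrix.of fun i j => M (row i) (col j)) ≤ r) ∧
  (∀ (k l : ℕ) (row : Fin k → Fin N) (col : Fin l → Fin N),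
      (∀ i j, col j < row i) →
        Matrix.rank (Matrix.of fun i j => M (row i) (col j)) ≤ r)

theorem stmt10 (N : ℕ) (A B : Matrix (Fin N) (Fin N) ℝ)
    (hA : Aᵀ = -A) (hB : Bᵀ = -B)
    (a b p q : Fin N → ℝ)
    (hAu : ∀ m n, m < n → A m n = a m * b n)
    (hAd : ∀ n, A n n = 0)
    (hAl : ∀ m n, n < m → A m n = -(a n * b m))
    (hBu : ∀ m n, m < n → B m n = p m * q n)
    (hBd : ∀ n, B n n = 0)
    (hBl : ∀ m n, n < m → B m n = -(p n * q m)) :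
    IsSemiSep (A * B) 2 := by
  unfold IsSemiSep
  have hT : ∀ m n, (A * B) m n = (B * A) n m := by
    intro m n
    have hmul : (A * B)ᵀ = B * A := by
      rw [Matrix.transpose_mul, hA, hB, Matrix.neg_mul, Matrix.mul_neg, neg_neg]
    rw [← hmul]; rfl
  constructor
  · intro k l row col hlt
    have : (Matrix.of fun i j => (A * B) (row i) (col j)) =
        Matrix.of fun i j =>
          ((-(b (row i) * ∑ s, if s < row i then a s * p s else 0)
            - a (row i) * ∑ s, if s ≤ row i then b s * p s else 0)) * q (col j)
          + a (row i) * ((q (col j) * (∑ s, if s < col j then b s * p s else 0)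
            - p (col j) * ∑ s, if (col j) < s then b s * q s else 0)) := by
      ext i j
      exact key A B a b p q hAu hAd hAl hBu hBd hBl _ _ (hlt i j)
    rw [this]
    exact rank2 _ _ _ _
  · intro k l row col hlt
    have hk : ∀ i j, (A * B) (row i) (col j) =
        b (row i) * ((-(q (col j) * ∑ s, if s < col j then p s * a s else 0)
            - p (col j) * ∑ s, if s ≤ col j then q s * a s else 0))
        + ((b (row i) * (∑ s, if s < row i then q s * a s else 0)
            - a (row i) * ∑ s, if (row i) < s then q s * b s else 0)) * p (col j) := by
      intro i j
      rw [hT]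
      rw [key B A p q a b hBu hBd hBl hAu hAd hAl _ _ (hlt i j)]
      ring
    have : (Matrix.of fun i j => (A * B) (row i) (col j)) =
        Matrix.of fun i j =>
          b (row i) * ((-(q (col j) * ∑ s, if s < col j then p s * a s else 0)
            - p (col j) * ∑ s, if s ≤ col j then q s * a s else 0))
          + ((b (row i) * (∑ s, if s < row i then q s * a s else 0)
            - a (row i) * ∑ s, if (row i) < s then q s * b s else 0)) * p (col j) := by
      ext i j
      exact hk i j
    rw [this]
    exact rank2 _ _ _ _
end

section
/- Let A, B be N×N real matrices with A semi-separable of rank ≤ s and B semi-separable of rank ≤ r. Then the product AB is semi-separable of rank ≤ r + s. -/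
namespace Matrix

theorem rank_add_le {m n K : Type*} [Fintype n] [Field K] (A B : Matrix m n K) :
    (A + B).rank ≤ A.rank + B.rank := by
  have h : LinearMap.range (A + B).mulVecLin ≤
      LinearMap.range A.mulVecLin ⊔ LinearMap.range B.mulVecLin := by
    rintro x ⟨v, rfl⟩
    rw [mulVecLin_add]
    exact Submodule.add_mem_sup ⟨v, rfl⟩ ⟨v, rfl⟩
  exact (Submodule.finrank_mono h).trans (Submodule.finrank_add_le_finrank_add_finrank _ _)

theorem submatrix_mul_eq_add {k l m n o α : Type*} [Fintype n] [NonUnitalNonAssocSemiring α]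
    (A : Matrix l n α) (B : Matrix n o α) (p : n → Prop) [DecidablePred p]
    (row : k → l) (col : m → o) :
    (A * B).submatrix row col =
      A.submatrix row ((↑) : Subtype p → n) * B.submatrix (↑) col +
        A.submatrix row ((↑) : {x // ¬p x} → n) * B.submatrix (↑) col := by
  ext i j
  simp only [submatrix_apply, add_apply, mul_apply]
  exact (Fintype.sum_subtype_add_sum_subtype p _).symm

section UpperSemiSep

variable {n K : Type*} [LinearOrder n] [Field K]

def IsUpperSemiSep (M : Matrix n n K) (r : ℕ) : Prop :=
  ∀ (k l : ℕ) (row : Fin k → n) (col : Fin l → n),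
    (∀ i j, row i < col j) → (M.submatrix row col).rank ≤ r

theorem IsUpperSemiSep.rank_submatrix_le {M : Matrix n n K} {r : ℕ} (h : M.IsUpperSemiSep r)
    {ι κ : Type*} [Fintype ι] [Fintype κ] (row : ι → n) (col : κ → n)
    (hlt : ∀ i j, row i < col j) : (M.submatrix row col).rank ≤ r := by
  rw [← rank_submatrix _ (Fintype.equivFin ι).symm (Fintype.equivFin κ).symm,
    submatrix_submatrix]
  exact h _ _ _ _ fun i j => hlt _ _

theorem IsUpperSemiSep.mul [Fintype n] {A B : Matrix n n K} {a b : ℕ}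
    (hA : A.IsUpperSemiSep a) (hB : B.IsUpperSemiSep b) : (A * B).IsUpperSemiSep (a + b) := by
  intro k l row col hlt
  rcases isEmpty_or_nonempty (Fin l) with hl | hl
  · exact (rank_le_card_width _).trans (by simp [Fintype.card_eq_zero])
  obtain ⟨j₀, hj₀⟩ := Finite.exists_min col
  rw [submatrix_mul_eq_add A B (· < col j₀), add_comm a b]
  have hB_above := hB.rank_submatrix_le _ col fun (x : {x // x < col j₀}) j => x.2.trans_le (hj₀ j)
  have hA_right := hA.rank_submatrix_le row _
    fun i (x : {x // ¬x < col j₀}) => (hlt i j₀).trans_le (not_lt.1 x.2)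
  exact (rank_add_le _ _).trans <| add_le_add
    ((rank_mul_le_right _ _).trans hB_above) ((rank_mul_le_left _ _).trans hA_right)

end UpperSemiSep

end Matrix

open Matrix

theorem isSemiSep_iff {N : ℕ} {M : Matrix (Fin N) (Fin N) ℝ} {r : ℕ} :
    IsSemiSep M r ↔ M.IsUpperSemiSep r ∧ Mᵀ.IsUpperSemiSep r := by
  refine and_congr Iff.rfl ⟨fun h k l row col hlt => ?_, fun h k l row col hlt => ?_⟩
  · rw [← transpose_submatrix, rank_transpose]
    exact h l k col row fun i j => hlt j i
  · change (M.submatrix row col).rank ≤ r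
    rw [← rank_transpose, transpose_submatrix]
    exact h l k col row fun i j => hlt j i

theorem stmt11 (N : ℕ) (A B : Matrix (Fin N) (Fin N) ℝ) (s r : ℕ)
    (hA : IsSemiSep A s) (hB : IsSemiSep B r) :
    IsSemiSep (A * B) (r + s) := by
  rw [isSemiSep_iff] at hA hB ⊢
  refine ⟨add_comm s r ▸ hA.1.mul hB.1, ?_⟩
  rw [transpose_mul]
  exact hB.2.mul hA.2
end
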